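/- Let X be a topological space. If player II has a winning strategy in the game ΩFO(X), then player I has a winning strategy in the ω-Rothberger game G1(Ω_X,Ω_X). -/

import Mathlib

open Set Filter Topology

/-- The list `[a 0, …, a (n-1)]` of the first `n` moves of a play `a`. -/
def hist {α : Type*} (a : ℕ → α) (n : ℕ) : List α :=
  List.ofFn fun i : Fin n => a i

section SelectionGames

variable {M : Type*}

/-- The selection principle `S1(A,B)`. -/
def S1 (A B : Set (Set M)) : Prop :=
  ∀ a : ℕ → Set M, (∀ n, a n ∈ A) →
    ∃ b : ℕ → M, (∀ n, b n ∈ a n) ∧ Set.range b ∈ B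

/-- The selection principle `Sfin(A,B)`. -/
def Sfin (A B : Set (Set M)) : Prop :=
  ∀ a : ℕ → Set M, (∀ n, a n ∈ A) →
    ∃ b : ℕ → Set M, (∀ n, b n ⊆ a n ∧ (b n).Finite) ∧ (⋃ n, b n) ∈ B

/-- Player I has a winning predetermined strategy in the selection game `G1(A,B)`:
a sequence of moves `σ n ∈ A`, depending only on the round number, such that
no legal sequence of responses by II produces a member of `B`. -/
def IPredetWinsG1 (A B : Set (Set M)) : Prop :=
  ∃ σ : ℕ → Set M, (∀ n, σ n ∈ A) ∧
    ∀ b : ℕ → M, (∀ n, b n ∈ σ n) → Set.range b ∉ B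

/-- Player I has a winning predetermined strategy in the selection game `Gfin(A,B)`. -/
def IPredetWinsGfin (A B : Set (Set M)) : Prop :=
  ∃ σ : ℕ → Set M, (∀ n, σ n ∈ A) ∧
    ∀ b : ℕ → Set M, (∀ n, b n ⊆ σ n ∧ (b n).Finite) → (⋃ n, b n) ∉ B

/-- Player I has a winning (perfect-information) strategy in `G1(A,B)`:
I's move in round `n` depends on II's previous moves `b 0, …, b (n-1)`. -/
def IWinsG1 (A B : Set (Set M)) : Prop :=
  ∃ σ : List M → Set M, (∀ h, σ h ∈ A) ∧
    ∀ b : ℕ → M, (∀ n, b n ∈ σ (hist b n)) → Set.range b ∉ B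

/-- Player II has a winning (perfect-information) strategy in `G1(A,B)`:
II's move in round `n` depends on I's previous moves `a 0, …, a (n-1)`
together with I's current move `a n`; it is legal and always produces a member of `B`. -/
def IIWinsG1 (A B : Set (Set M)) : Prop :=
  ∃ σ : List (Set M) → Set M → M,
    ∀ a : ℕ → Set M, (∀ n, a n ∈ A) →
      (∀ n, σ (hist a n) (a n) ∈ a n) ∧
      Set.range (fun n => σ (hist a n) (a n)) ∈ B

/-- Player II has a winning Markov strategy in `G1(A,B)`: II's move depends only on
I's current move and the round number. -/
def IIMarkovWinsG1 (A B : Set (Set M)) : Prop :=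
  ∃ σ : Set M → ℕ → M,
    ∀ a : ℕ → Set M, (∀ n, a n ∈ A) →
      (∀ n, σ (a n) n ∈ a n) ∧
      Set.range (fun n => σ (a n) n) ∈ B

end SelectionGames

section TopologicalGames

variable {X : Type*}

/-- `𝒰` is an open cover of the space `X`. -/
def IsOpenCover [TopologicalSpace X] (𝒰 : Set (Set X)) : Prop :=
  (∀ U ∈ 𝒰, IsOpen U) ∧ ⋃₀ 𝒰 = Set.univ

/-- `𝒰` is an ω-cover of `X`: an open cover such that every finite subset of `X`
is contained in a single member of `𝒰`. -/
def IsOmegaCover [TopologicalSpace X] (𝒰 : Set (Set X)) : Prop :=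
  IsOpenCover 𝒰 ∧ ∀ F : Finset X, ∃ U ∈ 𝒰, ↑F ⊆ U

/-- `D` is a closed discrete subset of the space. -/
def IsClosedDiscrete [TopologicalSpace X] (D : Set X) : Prop :=
  IsClosed D ∧ ∀ x ∈ D, ∃ U : Set X, IsOpen U ∧ U ∩ D = {x}

/-- Player I has a winning predetermined strategy in the point-open game `PO(X)`. -/
def IPredetWinsPO (X : Type*) [TopologicalSpace X] : Prop :=
  ∃ p : ℕ → X, ∀ U : ℕ → Set X,
    (∀ n, IsOpen (U n) ∧ p n ∈ U n) → (⋃ n, U n) = Set.univ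

/-- Player II has a winning Markov strategy in the point-open game `PO(X)`. -/
def IIMarkovWinsPO (X : Type*) [TopologicalSpace X] : Prop :=
  ∃ σ : X → ℕ → Set X,
    (∀ x n, IsOpen (σ x n) ∧ x ∈ σ x n) ∧
    ∀ p : ℕ → X, (⋃ n, σ (p n) n) ≠ Set.univ

/-- Player I has a winning predetermined strategy in the finite-open game `FO(X)`. -/
def IPredetWinsFO (X : Type*) [TopologicalSpace X] : Prop :=
  ∃ p : ℕ → Finset X, ∀ U : ℕ → Set X,
    (∀ n, IsOpen (U n) ∧ ↑(p n) ⊆ U n) → (⋃ n, U n) = Set.univ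

/-- Player II has a winning Markov strategy in the finite-open game `FO(X)`. -/
def IIMarkovWinsFO (X : Type*) [TopologicalSpace X] : Prop :=
  ∃ σ : Finset X → ℕ → Set X,
    (∀ F n, IsOpen (σ F n) ∧ ↑F ⊆ σ F n) ∧
    ∀ F : ℕ → Finset X, (⋃ n, σ (F n) n) ≠ Set.univ

/-- Player I has a winning predetermined strategy in the game `ΩFO(X)`. -/
def IPredetWinsOmegaFO (X : Type*) [TopologicalSpace X] : Prop :=
  ∃ p : ℕ → Finset X, ∀ U : ℕ → Set X,
    (∀ n, IsOpen (U n) ∧ ↑(p n) ⊆ U n) → IsOmegaCover (Set.range U)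

/-- Player I has a winning (perfect-information) strategy in the game `ΩFO(X)`:
I's move in round `n` depends on II's previous moves `U 0, …, U (n-1)`. -/
def IWinsOmegaFO (X : Type*) [TopologicalSpace X] : Prop :=
  ∃ σ : List (Set X) → Finset X, ∀ U : ℕ → Set X,
    (∀ n, IsOpen (U n) ∧ ↑(σ (hist U n)) ⊆ U n) → IsOmegaCover (Set.range U)

/-- Player II has a winning (perfect-information) strategy in the game `ΩFO(X)`:
II's move in round `n` depends on I's previous moves together with I's current move. -/
def IIWinsOmegaFO (X : Type*) [TopologicalSpace X] : Prop :=
  ∃ σ : List (Finset X) → Finset X → Set X,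
    (∀ h F, IsOpen (σ h F) ∧ ↑F ⊆ σ h F) ∧
    ∀ F : ℕ → Finset X, ¬ IsOmegaCover (Set.range fun n => σ (hist F n) (F n))

/-- Player II has a winning Markov strategy in the game `ΩFO(X)`. -/
def IIMarkovWinsOmegaFO (X : Type*) [TopologicalSpace X] : Prop :=
  ∃ σ : Finset X → ℕ → Set X,
    (∀ F n, IsOpen (σ F n) ∧ ↑F ⊆ σ F n) ∧
    ∀ F : ℕ → Finset X, ¬ IsOmegaCover (Set.range fun n => σ (F n) n)

/-- Player II has a winning tactic in the game `ΩPO(X)`: II's move depends only on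
I's current move. -/
def IITacticWinsOmegaPO (X : Type*) [TopologicalSpace X] : Prop :=
  ∃ σ : X → Set X,
    (∀ x, IsOpen (σ x) ∧ x ∈ σ x) ∧
    ∀ p : ℕ → X, ¬ IsOmegaCover (Set.range fun n => σ (p n))

/-- Player I has a winning (perfect-information) strategy in the discrete
selection game `CD(Y)`. -/
def IWinsCD (Y : Type*) [TopologicalSpace Y] : Prop :=
  ∃ σ : List Y → Set Y,
    (∀ h, IsOpen (σ h) ∧ (σ h).Nonempty) ∧
    ∀ y : ℕ → Y, (∀ n, y n ∈ σ (hist y n)) → ¬ IsClosedDiscrete (Set.range y)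

/-- Player I has a winning predetermined strategy in the discrete selection game `CD(Y)`. -/
def IPredetWinsCD (Y : Type*) [TopologicalSpace Y] : Prop :=
  ∃ U : ℕ → Set Y, (∀ n, IsOpen (U n) ∧ (U n).Nonempty) ∧
    ∀ y : ℕ → Y, (∀ n, y n ∈ U n) → ¬ IsClosedDiscrete (Set.range y)

/-- Player II has a winning (perfect-information) strategy in the discrete
selection game `CD(Y)`. -/
def IIWinsCD (Y : Type*) [TopologicalSpace Y] : Prop :=
  ∃ σ : List (Set Y) → Set Y → Y,
    ∀ U : ℕ → Set Y, (∀ n, IsOpen (U n) ∧ (U n).Nonempty) →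
      (∀ n, σ (hist U n) (U n) ∈ U n) ∧
      IsClosedDiscrete (Set.range fun n => σ (hist U n) (U n))

/-- Player II has a winning Markov strategy in the discrete selection game `CD(Y)`. -/
def IIMarkovWinsCD (Y : Type*) [TopologicalSpace Y] : Prop :=
  ∃ σ : Set Y → ℕ → Y,
    ∀ U : ℕ → Set Y, (∀ n, IsOpen (U n) ∧ (U n).Nonempty) →
      (∀ n, σ (U n) n ∈ U n) ∧
      IsClosedDiscrete (Set.range fun n => σ (U n) n)

/-- Player II has a winning (perfect-information) strategy in the closure game `CL(Y,x)`. -/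
def IIWinsCL (Y : Type*) [TopologicalSpace Y] (x : Y) : Prop :=
  ∃ σ : List (Set Y) → Set Y → Y,
    ∀ U : ℕ → Set Y, (∀ n, IsOpen (U n) ∧ (U n).Nonempty) →
      (∀ n, σ (hist U n) (U n) ∈ U n) ∧
      x ∉ closure (Set.range fun n => σ (hist U n) (U n))

/-- Player II has a winning Markov strategy in the closure game `CL(Y,x)`. -/
def IIMarkovWinsCL (Y : Type*) [TopologicalSpace Y] (x : Y) : Prop :=
  ∃ σ : Set Y → ℕ → Y,
    ∀ U : ℕ → Set Y, (∀ n, IsOpen (U n) ∧ (U n).Nonempty) →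
      (∀ n, σ (U n) n ∈ U n) ∧
      x ∉ closure (Set.range fun n => σ (U n) n)

/-- Player II has a winning (perfect-information) strategy in Gruenhage's
clustering game at `x`. -/
def IIWinsGruCluster (Y : Type*) [TopologicalSpace Y] (x : Y) : Prop :=
  ∃ σ : List (Set Y) → Set Y → Y,
    ∀ U : ℕ → Set Y, (∀ n, IsOpen (U n) ∧ x ∈ U n) →
      (∀ n, σ (hist U n) (U n) ∈ U n) ∧
      ¬ MapClusterPt x atTop (fun n => σ (hist U n) (U n))

/-- Player II has a winning Markov strategy in Gruenhage's clustering game at `x`. -/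
def IIMarkovWinsGruCluster (Y : Type*) [TopologicalSpace Y] (x : Y) : Prop :=
  ∃ σ : Set Y → ℕ → Y,
    ∀ U : ℕ → Set Y, (∀ n, IsOpen (U n) ∧ x ∈ U n) →
      (∀ n, σ (U n) n ∈ U n) ∧
      ¬ MapClusterPt x atTop (fun n => σ (U n) n)

/-- Player I has a winning predetermined strategy in Gruenhage's clustering game at `x`. -/
def IPredetWinsGruCluster (Y : Type*) [TopologicalSpace Y] (x : Y) : Prop :=
  ∃ U : ℕ → Set Y, (∀ n, IsOpen (U n) ∧ x ∈ U n) ∧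
    ∀ y : ℕ → Y, (∀ n, y n ∈ U n) → MapClusterPt x atTop y

/-- Player I has a winning predetermined strategy in Gruenhage's W-game at `x`
(I wins when II's points converge to `x`). -/
def IPredetWinsGruW (Y : Type*) [TopologicalSpace Y] (x : Y) : Prop :=
  ∃ U : ℕ → Set Y, (∀ n, IsOpen (U n) ∧ x ∈ U n) ∧
    ∀ y : ℕ → Y, (∀ n, y n ∈ U n) → Filter.Tendsto y atTop (𝓝 x)

end TopologicalGames

/-- `Cp X`: the continuous real-valued functions on `X` with the topology of
pointwise convergence (inherited from the product topology on `X → ℝ`). -/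
def Cp (X : Type*) [TopologicalSpace X] : Type _ := {f : X → ℝ // Continuous f}

instance (X : Type*) [TopologicalSpace X] : TopologicalSpace (Cp X) :=
  inferInstanceAs (TopologicalSpace {f : X → ℝ // Continuous f})

/-- The constant zero function, as an element of `Cp X`. -/
def Cp.zero (X : Type*) [TopologicalSpace X] : Cp X := ⟨fun _ => 0, continuous_const⟩

/-!
Let `σ` be a winning strategy for II in `ΩFO(X)`. In each round, I offers in `G1(Ω_X, Ω_X)` the
family of all answers of `σ` to the `ΩFO`-position reached so far; as `σ` answers every finite set
by an open superset, this family is an ω-cover. Whatever II selects from it is `σ`'s answer to some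
finite set, which I records as its own move in `ΩFO`. Any play of `G1` against this strategy is
thus the sequence of `σ`'s answers in a play of `ΩFO`, and so is not an ω-cover.
-/

lemma hist_succ {α : Type*} (a : ℕ → α) (n : ℕ) : hist a (n + 1) = hist a n ++ [a n] := by
  rw [hist, hist, List.ofFn_succ', List.concat_eq_append]; rfl

section RecoverMoves

variable {β γ : Type*} [Nonempty β]

/-- I's moves `b₀, …, bₙ₋₁` read back from II's answers `c₀, …, cₙ₋₁` to `σ`, each chosen with
`cₖ = σ [b₀, …, bₖ₋₁] bₖ` whenever such a choice exists. -/
noncomputable def recoverMoves (σ : List β → β → γ) (l : List γ) : List β :=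
  l.foldl (fun h c => h ++ [Function.invFun (σ h) c]) []

lemma recoverMoves_append_singleton (σ : List β → β → γ) (l : List γ) (c : γ) :
    recoverMoves σ (l ++ [c]) =
      recoverMoves σ l ++ [Function.invFun (σ (recoverMoves σ l)) c] := by
  simp [recoverMoves, List.foldl_append]

lemma recoverMoves_hist (σ : List β → β → γ) (c : ℕ → γ) (n : ℕ) :
    recoverMoves σ (hist c n) =
      hist (fun k => Function.invFun (σ (recoverMoves σ (hist c k))) (c k)) n := by
  induction n with
  | zero => rfl
  | succ n ih => rw [hist_succ, recoverMoves_append_singleton, ih, hist_succ, ← ih]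

lemma exists_play_of_mem_range_recoverMoves (σ : List β → β → γ) (c : ℕ → γ)
    (hc : ∀ n, c n ∈ Set.range (σ (recoverMoves σ (hist c n)))) :
    ∃ b : ℕ → β, ∀ n, σ (hist b n) (b n) = c n :=
  ⟨_, fun n => by rw [← recoverMoves_hist]; exact Function.invFun_eq (hc n)⟩

end RecoverMoves

lemma isOmegaCover_range {X : Type*} [TopologicalSpace X] {τ : Finset X → Set X}
    (hτ : ∀ F, IsOpen (τ F) ∧ ↑F ⊆ τ F) : IsOmegaCover (Set.range τ) := by
  refine ⟨⟨?_, Set.eq_univ_of_forall fun x => ?_⟩, fun F => ⟨τ F, ⟨F, rfl⟩, (hτ F).2⟩⟩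
  · rintro _ ⟨F, rfl⟩
    exact (hτ F).1
  · exact ⟨τ {x}, ⟨{x}, rfl⟩, (hτ {x}).2 (by simp)⟩

/-- For a topological space `X`, if II has a winning strategy in
`ΩFO(X)`, then I has a winning strategy in the ω-Rothberger game `G1(Ω_X, Ω_X)`. -/
theorem II_wins_omegaFO_implies_I_wins_omega_rothberger
    (X : Type*) [TopologicalSpace X] (h : IIWinsOmegaFO X) :
    IWinsG1 {𝒰 : Set (Set X) | IsOmegaCover 𝒰} {𝒰 : Set (Set X) | IsOmegaCover 𝒰} := by
  obtain ⟨σ, hσ, hwin⟩ := h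
  refine ⟨fun l => Set.range (σ (recoverMoves σ l)), fun l => isOmegaCover_range (hσ _),
    fun c hc hcover => ?_⟩
  obtain ⟨b, hb⟩ := exists_play_of_mem_range_recoverMoves σ c hc
  exact hwin b (by simp only [hb]; exact hcover)
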